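/- Let r ≥ 2 and let L(x,y) = ∑_{T∈U_r} wt_y(T) where wt_y(T) = ∏_{v=2}^{r}( x_{f_T(v)} ∑_{u∈h_T(v)} y_{v,u} ). Then y_{1,1}·L(x,y) = ∑_{π ∈ Π_1({1,...,r})} D(π) · ∑_{T ∈ E(π)} κ(T), where the sum is over set partitions π of {1,...,r} having {1} as a block, D(π) = ∑_{g} ∏_{i=1}^{r} y_{i,g(i)} sums over dominating functions g: {1,...,r} → {1,...,r} (g(i) ≥ i for all i) whose functional digraph has connected components exactly the blocks of π, E(π) is the set of unordered increasing trees T on {1,...,r} such that every block of π is a chain in T (for i < j in the same block, i is an ancestor of j), and κ(T) = ∏_{i=1}^{r} x_i^{σ_i(T)} with σ_i(T) the number of children of vertex i. -/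

import Mathlib

open scoped Classical

/-- An unordered increasing tree on the vertex set `{1,…,r}` (vertex `i+1` is
represented by `(i : Fin r)`): a parent function `p` with `p 1 = 1` (index `0`)
and `f_T(v) < v` for every nonroot vertex `v`; the root is `1`. -/
def IncTree (r : ℕ) : Type :=
  {p : Fin r → Fin r // ∀ v : Fin r, (v.val = 0 → p v = v) ∧ (v.val ≠ 0 → p v < v)}

noncomputable instance (r : ℕ) : Fintype (IncTree r) := by
  unfold IncTree; infer_instance

/-- The hook `h_T(v)` of a vertex `v` (as a set): `v` together with all of its
descendants, i.e. all `u` some iterated parent of which is `v`. -/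
noncomputable def hook {r : ℕ} (p : Fin r → Fin r) (v : Fin r) : Finset (Fin r) :=
  Finset.univ.filter (fun u => ∃ k ∈ Finset.range (r + 1), p^[k] u = v)

/-- The number of sons `σ_i(T)` of the vertex `i`. -/
noncomputable def sons {r : ℕ} (T : IncTree r) (i : Fin r) : ℕ :=
  (Finset.univ.filter (fun v : Fin r => v.val ≠ 0 ∧ T.val v = i)).card

/-- The polynomial ring over `ℤ` in the commuting indeterminates `x_i` and
`y_{i,j}`. -/
abbrev R : Type := MvPolynomial (ℕ ⊕ ℕ × ℕ) ℤ

/-- The indeterminate `x_n`. -/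
noncomputable def x (n : ℕ) : R := MvPolynomial.X (Sum.inl n)

/-- The indeterminate `y_{i,j}`. -/
noncomputable def y (i j : ℕ) : R := MvPolynomial.X (Sum.inr (i, j))

/-- `π` is a set partition of `{1,…,r}` having `{1}` (the vertex of index `0`)
as a block. -/
def IsPartition1 {r : ℕ} (π : Finset (Finset (Fin r))) : Prop :=
  (∀ B ∈ π, B.Nonempty) ∧ (∀ v : Fin r, ∃! B, B ∈ π ∧ v ∈ B) ∧
    Finset.univ.filter (fun v : Fin r => v.val = 0) ∈ π

/-- The function `g` is dominating: `g(i) ≥ i` for all `i`. -/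
def Dominating {r : ℕ} (g : Fin r → Fin r) : Prop := ∀ i, i ≤ g i

/-- The partition induced by `g` is `π`: two elements lie in the same block of
`π` exactly when they lie in the same weakly connected component of the
functional digraph of `g` (with edges `(i, g i)`). -/
def InducesPartition {r : ℕ} (g : Fin r → Fin r) (π : Finset (Finset (Fin r))) : Prop :=
  ∀ i j : Fin r, (∃ B ∈ π, i ∈ B ∧ j ∈ B) ↔ Relation.EqvGen (fun a b => g a = b) i j

/-- `D(π) = ∑_g ∏_i y_{i,g(i)}`, summed over dominating functions on `{1,…,r}`
with induced partition `π`. -/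
noncomputable def D {r : ℕ} (π : Finset (Finset (Fin r))) : R :=
  ∑ g ∈ Finset.univ.filter
      (fun g : Fin r → Fin r => Dominating g ∧ InducesPartition g π),
    ∏ i : Fin r, y (i.val + 1) ((g i).val + 1)

/-- `T ∈ E(π)`: every block of `π` is a chain of ancestors in `T`. -/
def MemE {r : ℕ} (T : IncTree r) (π : Finset (Finset (Fin r))) : Prop :=
  ∀ B ∈ π, ∀ i ∈ B, ∀ j ∈ B, i ≤ j → j ∈ hook T.val i

/-- `κ(T) = ∏_i x_i^{σ_i(T)}` where `σ_i(T)` is the number of sons of `i`. -/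
noncomputable def kappa {r : ℕ} (T : IncTree r) : R :=
  ∏ i : Fin r, x (i.val + 1) ^ (sons T i)


/-!
Expanding the product, `y_{1,1} · wt_y(T) = κ(T) · ∑_g ∏_i y_{i,g(i)}` over the maps `g` with
`g(1) = 1` and `g(v) ∈ h_T(v)` for all `v`. These are exactly the dominating maps with `g(1) = 1`
whose components are chains of `T`: iterating `g` stays inside hooks, so two vertices of one
component have a common descendant and are therefore comparable; conversely `v` and `g(v)` lie in
a common chain. A dominating map with `g(1) = 1` has `{1}` as a component, so it induces a unique
partition `π ∈ Π_1`, and exchanging the sums over `T` and `g` gives the right-hand side.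
-/

open Finset

section Hook

variable {r : ℕ} {p : Fin r → Fin r}

lemma exists_iterate_eq_of_le_val (hp : ∀ v, p v ≤ v) {u v : Fin r} {k : ℕ}
    (h : p^[k] u = v) : ∃ k' ≤ u.val, p^[k'] u = v := by
  induction k generalizing u with
  | zero => exact ⟨0, Nat.zero_le _, h⟩
  | succ k ih =>
    rw [Function.iterate_succ_apply] at h
    rcases (hp u).eq_or_lt with hfix | hlt
    · exact ⟨0, Nat.zero_le _, by rw [← h, hfix, Function.iterate_fixed hfix k]; rfl⟩
    · obtain ⟨k', hk', h'⟩ := ih h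
      exact ⟨k' + 1, by rw [Fin.lt_def] at hlt; omega, h'⟩

lemma mem_hook_iff (hp : ∀ v, p v ≤ v) {u v : Fin r} :
    u ∈ hook p v ↔ ∃ k, p^[k] u = v := by
  simp only [hook, mem_filter, mem_univ, true_and, mem_range]
  refine ⟨fun ⟨k, _, hk⟩ => ⟨k, hk⟩, fun ⟨k, hk⟩ => ?_⟩
  obtain ⟨k', hk', h'⟩ := exists_iterate_eq_of_le_val hp hk
  exact ⟨k', by omega, h'⟩

lemma self_mem_hook (hp : ∀ v, p v ≤ v) (v : Fin r) : v ∈ hook p v :=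
  (mem_hook_iff hp).2 ⟨0, rfl⟩

lemma le_of_mem_hook (hp : ∀ v, p v ≤ v) {u v : Fin r} (h : u ∈ hook p v) : v ≤ u := by
  obtain ⟨k, rfl⟩ := (mem_hook_iff hp).1 h
  exact Function.iterate_le_id_of_le_id (show p ≤ id from hp) k u

lemma mem_hook_trans (hp : ∀ v, p v ≤ v) {u v w : Fin r}
    (huv : u ∈ hook p v) (hwu : w ∈ hook p u) : w ∈ hook p v := by
  obtain ⟨k, rfl⟩ := (mem_hook_iff hp).1 huv
  obtain ⟨l, rfl⟩ := (mem_hook_iff hp).1 hwu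
  exact (mem_hook_iff hp).2 ⟨k + l, Function.iterate_add_apply p k l w⟩

lemma mem_hook_or_mem_hook_of_mem_hook (hp : ∀ v, p v ≤ v) {w a b : Fin r}
    (ha : w ∈ hook p a) (hb : w ∈ hook p b) : a ∈ hook p b ∨ b ∈ hook p a := by
  obtain ⟨k, rfl⟩ := (mem_hook_iff hp).1 ha
  obtain ⟨l, hl⟩ := (mem_hook_iff hp).1 hb
  rcases le_total k l with hkl | hlk
  · refine .inl ((mem_hook_iff hp).2 ⟨l - k, ?_⟩)
    rw [← Function.iterate_add_apply, Nat.sub_add_cancel hkl, hl]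
  · refine .inr ((mem_hook_iff hp).2 ⟨k - l, ?_⟩)
    rw [← hl, ← Function.iterate_add_apply, Nat.sub_add_cancel hlk]

lemma iterate_mem_hook (hp : ∀ v, p v ≤ v) {g : Fin r → Fin r}
    (hg : ∀ v, g v ∈ hook p v) (k : ℕ) (v : Fin r) : g^[k] v ∈ hook p v := by
  induction k with
  | zero => exact self_mem_hook hp v
  | succ k ih =>
    rw [Function.iterate_succ_apply']
    exact mem_hook_trans hp ih (hg _)

end Hook

lemma IncTree.parent_le {r : ℕ} (T : IncTree r) (v : Fin r) : T.val v ≤ v := by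
  by_cases hv : v.val = 0
  · exact ((T.property v).1 hv).le
  · exact ((T.property v).2 hv).le

section Components

variable {α : Type*} {g : α → α}

lemma exists_iterate_eq_of_eqvGen {i j : α} (h : Relation.EqvGen (fun a b => g a = b) i j) :
    ∃ k l, g^[k] i = g^[l] j := by
  induction h with
  | rel a b hab => exact ⟨1, 0, hab⟩
  | refl a => exact ⟨0, 0, rfl⟩
  | symm a b _ ih =>
    obtain ⟨k, l, h⟩ := ih
    exact ⟨l, k, h.symm⟩
  | trans a b c _ _ ih₁ ih₂ =>
    obtain ⟨k, l, h₁⟩ := ih₁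
    obtain ⟨k', l', h₂⟩ := ih₂
    refine ⟨k' + k, l + l', ?_⟩
    rw [Function.iterate_add_apply, h₁, ← Function.iterate_add_apply, add_comm,
      Function.iterate_add_apply, h₂, ← Function.iterate_add_apply]

lemma le_of_eqvGen_of_fixed [Preorder α] (hg : ∀ i, i ≤ g i) {a j : α} (ha : g a = a)
    (h : Relation.EqvGen (fun a b => g a = b) a j) : j ≤ a := by
  obtain ⟨k, l, hkl⟩ := exists_iterate_eq_of_eqvGen h
  rw [Function.iterate_fixed ha] at hkl
  exact hkl ▸ Function.id_le_iterate_of_id_le (show id ≤ g from hg) l j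

end Components

section Blocks

variable {α : Type*} [Fintype α] {s : α → α → Prop}

noncomputable def eqvBlocks (s : α → α → Prop) : Finset (Finset α) :=
  univ.image fun a => univ.filter (s a)

lemma mem_eqvBlocks {B : Finset α} : B ∈ eqvBlocks s ↔ ∃ a, univ.filter (s a) = B := by
  simp [eqvBlocks]

lemma exists_mem_eqvBlocks_iff (hs : Equivalence s) {i j : α} :
    (∃ B ∈ eqvBlocks s, i ∈ B ∧ j ∈ B) ↔ s i j := by
  constructor
  · rintro ⟨B, hB, hi, hj⟩
    obtain ⟨a, rfl⟩ := mem_eqvBlocks.1 hB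
    simp only [mem_filter, mem_univ, true_and] at hi hj
    exact hs.trans (hs.symm hi) hj
  · intro hij
    exact ⟨_, mem_eqvBlocks.2 ⟨i, rfl⟩, by simpa using hs.refl i, by simpa using hij⟩

lemma nonempty_of_mem_eqvBlocks (hs : Equivalence s) {B : Finset α} (hB : B ∈ eqvBlocks s) :
    B.Nonempty := by
  obtain ⟨a, rfl⟩ := mem_eqvBlocks.1 hB
  exact ⟨a, by simpa using hs.refl a⟩

lemma existsUnique_mem_eqvBlocks (hs : Equivalence s) (v : α) :
    ∃! B, B ∈ eqvBlocks s ∧ v ∈ B := by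
  refine ⟨_, ⟨mem_eqvBlocks.2 ⟨v, rfl⟩, by simpa using hs.refl v⟩, ?_⟩
  rintro B ⟨hB, hv⟩
  obtain ⟨a, rfl⟩ := mem_eqvBlocks.1 hB
  simp only [mem_filter, mem_univ, true_and] at hv
  ext b
  simpa using ⟨fun hab => hs.trans (hs.symm hv) hab, fun hvb => hs.trans hv hvb⟩

lemma eq_eqvBlocks {π : Finset (Finset α)} (hne : ∀ B ∈ π, B.Nonempty)
    (huniq : ∀ v, ∃! B, B ∈ π ∧ v ∈ B) (hπ : ∀ i j, (∃ B ∈ π, i ∈ B ∧ j ∈ B) ↔ s i j) :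
    π = eqvBlocks s := by
  have block_eq {B : Finset α} {i : α} (hB : B ∈ π) (hi : i ∈ B) : univ.filter (s i) = B := by
    ext j
    simp only [mem_filter, mem_univ, true_and, ← hπ]
    refine ⟨fun ⟨B', hB', hi', hj'⟩ => ?_, fun hj => ⟨B, hB, hi, hj⟩⟩
    rwa [(huniq i).unique ⟨hB, hi⟩ ⟨hB', hi'⟩]
  ext B
  rw [mem_eqvBlocks]
  constructor
  · intro hB
    obtain ⟨i, hi⟩ := hne B hB
    exact ⟨i, block_eq hB hi⟩
  · rintro ⟨i, rfl⟩
    obtain ⟨B, ⟨hB, hi⟩, -⟩ := huniq i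
    rwa [block_eq hB hi]

end Blocks

noncomputable def inducedPartition {α : Type*} [Fintype α] (g : α → α) : Finset (Finset α) :=
  eqvBlocks (Relation.EqvGen fun a b => g a = b)

section InducedPartition

variable {r : ℕ} {g : Fin r → Fin r}

lemma inducesPartition_iff {π : Finset (Finset (Fin r))} (hne : ∀ B ∈ π, B.Nonempty)
    (huniq : ∀ v, ∃! B, B ∈ π ∧ v ∈ B) : InducesPartition g π ↔ π = inducedPartition g :=
  ⟨eq_eqvBlocks hne huniq, fun h => h ▸ fun _ _ =>
    exists_mem_eqvBlocks_iff (Relation.EqvGen.is_equivalence _)⟩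

variable [NeZero r]

lemma isPartition1_inducedPartition (hg : Dominating g) (h0 : g 0 = 0) :
    IsPartition1 (inducedPartition g) := by
  have hs := Relation.EqvGen.is_equivalence (fun a b => g a = b)
  refine ⟨fun B => nonempty_of_mem_eqvBlocks hs, existsUnique_mem_eqvBlocks hs,
    mem_eqvBlocks.2 ⟨0, ?_⟩⟩
  ext j
  simp only [mem_filter, mem_univ, true_and, Fin.val_eq_zero_iff]
  refine ⟨fun h => nonpos_iff_eq_zero.1 (le_of_eqvGen_of_fixed hg h0 h), ?_⟩
  rintro rfl
  exact Relation.EqvGen.refl 0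

lemma eq_zero_of_inducesPartition {π : Finset (Finset (Fin r))} (hπ : IsPartition1 π)
    (hI : InducesPartition g π) : g 0 = 0 := by
  obtain ⟨B, hB, h0, hg0⟩ := (hI 0 (g 0)).2 (Relation.EqvGen.rel _ _ rfl)
  have hB0 : B = univ.filter (fun v : Fin r => v.val = 0) :=
    (hπ.2.1 0).unique ⟨hB, h0⟩ ⟨hπ.2.2, by simp⟩
  simpa [hB0, Fin.val_eq_zero_iff] using hg0

lemma isPartition1_and_inducesPartition_iff (hg : Dominating g) {π : Finset (Finset (Fin r))} :
    IsPartition1 π ∧ InducesPartition g π ↔ g 0 = 0 ∧ π = inducedPartition g := by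
  constructor
  · rintro ⟨hπ, hI⟩
    exact ⟨eq_zero_of_inducesPartition hπ hI, (inducesPartition_iff hπ.1 hπ.2.1).1 hI⟩
  · rintro ⟨h0, rfl⟩
    have hπ := isPartition1_inducedPartition hg h0
    exact ⟨hπ, (inducesPartition_iff hπ.1 hπ.2.1).2 rfl⟩

end InducedPartition

section Tree

variable {r : ℕ}

lemma forall_mem_hook_iff (T : IncTree r) (g : Fin r → Fin r) :
    (∀ v, g v ∈ hook T.val v) ↔ Dominating g ∧ MemE T (inducedPartition g) := by
  have hp := T.parent_le
  have hs := Relation.EqvGen.is_equivalence (fun a b => g a = b)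
  constructor
  · intro hg
    refine ⟨fun v => le_of_mem_hook hp (hg v), fun B hB i hi j hj hij => ?_⟩
    obtain ⟨k, l, hkl⟩ :=
      exists_iterate_eq_of_eqvGen ((exists_mem_eqvBlocks_iff hs).1 ⟨B, hB, hi, hj⟩)
    -- `g^[k] i = g^[l] j` is a common descendant of `i` and `j`, so they are comparable.
    rcases mem_hook_or_mem_hook_of_mem_hook hp (iterate_mem_hook hp hg k i)
      (hkl ▸ iterate_mem_hook hp hg l j) with hij' | hji
    · rw [le_antisymm hij (le_of_mem_hook hp hij')]
      exact self_mem_hook hp j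
    · exact hji
  · rintro ⟨hd, hm⟩ v
    obtain ⟨B, hB, hv, hgv⟩ := (exists_mem_eqvBlocks_iff hs).2 (Relation.EqvGen.rel v (g v) rfl)
    exact hm B hB v hv (g v) hgv (hd v)

lemma prod_x_parent_eq_kappa (T : IncTree r) :
    ∏ v ∈ univ.filter (fun v : Fin r => v.val ≠ 0), x ((T.val v).val + 1) = kappa T := by
  rw [← prod_fiberwise_of_maps_to' (t := univ) (g := T.val) (fun _ _ => mem_univ _)
    (fun i => x (i.val + 1))]
  refine prod_congr rfl fun i _ => ?_
  rw [prod_const, sons, filter_filter]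

variable [NeZero r]

noncomputable def hookFunctions (T : IncTree r) : Finset (Fin r → Fin r) :=
  Fintype.piFinset fun v => if v = 0 then {0} else hook T.val v

lemma mem_hookFunctions {T : IncTree r} {g : Fin r → Fin r} :
    g ∈ hookFunctions T ↔ g 0 = 0 ∧ ∀ v, g v ∈ hook T.val v := by
  simp only [hookFunctions, Fintype.mem_piFinset]
  constructor
  · intro hg
    have h0 : g 0 = 0 := by simpa using hg 0
    refine ⟨h0, fun v => ?_⟩
    by_cases hv : v = 0
    · rw [hv, h0]
      exact self_mem_hook T.parent_le 0
    · simpa [hv] using hg v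
  · rintro ⟨h0, hg⟩ v
    split_ifs with hv
    · simp [hv, h0]
    · exact hg v

noncomputable def yWeight (g : Fin r → Fin r) : R :=
  ∏ i, y (i.val + 1) ((g i).val + 1)

lemma y_one_one_mul_treeWeight (T : IncTree r) :
    y 1 1 * ∏ v ∈ univ.filter (fun v : Fin r => v.val ≠ 0),
        x ((T.val v).val + 1) * ∑ u ∈ hook T.val v, y (v.val + 1) (u.val + 1)
      = kappa T * ∑ g ∈ hookFunctions T, yWeight g := by
  rw [prod_mul_distrib, prod_x_parent_eq_kappa, mul_left_comm]
  congr 1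
  have hfilter : univ.filter (fun v : Fin r => v.val ≠ 0) = univ.erase 0 := by
    ext v
    simp [Fin.val_eq_zero_iff]
  refine Eq.trans ?_ (prod_univ_sum _ fun (i j : Fin r) => y (i.val + 1) (j.val + 1))
  rw [← mul_prod_erase univ _ (mem_univ 0), hfilter]
  refine congrArg₂ _ (by simp) (prod_congr rfl fun v hv => ?_)
  rw [if_neg (ne_of_mem_erase hv)]

end Tree

lemma sum_D_mul_sum_kappa {r : ℕ} [NeZero r] :
    ∑ π ∈ univ.filter (fun π : Finset (Finset (Fin r)) => IsPartition1 π),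
        D π * ∑ T ∈ univ.filter (fun T : IncTree r => MemE T π), kappa T
      = ∑ g ∈ univ.filter (fun g : Fin r → Fin r => Dominating g ∧ g 0 = 0),
          ∑ T ∈ univ.filter (fun T : IncTree r => MemE T (inducedPartition g)),
            kappa T * yWeight g := by
  have hmaps : ∀ g ∈ univ.filter (fun g : Fin r → Fin r => Dominating g ∧ g 0 = 0),
      inducedPartition g ∈ univ.filter (fun π : Finset (Finset (Fin r)) => IsPartition1 π) := by
    intro g hg
    rw [mem_filter] at hg ⊢
    exact ⟨mem_univ _, isPartition1_inducedPartition hg.2.1 hg.2.2⟩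
  rw [← sum_fiberwise_of_maps_to hmaps]
  refine sum_congr rfl fun π hπ => ?_
  have hfiber : univ.filter (fun g => Dominating g ∧ InducesPartition g π)
      = (univ.filter fun g : Fin r → Fin r => Dominating g ∧ g 0 = 0).filter
          fun g => inducedPartition g = π := by
    ext g
    simp only [mem_filter, mem_univ, true_and] at hπ ⊢
    constructor
    · rintro ⟨hd, hI⟩
      obtain ⟨h0, rfl⟩ := (isPartition1_and_inducesPartition_iff hd).1 ⟨hπ, hI⟩
      exact ⟨⟨hd, h0⟩, rfl⟩
    · rintro ⟨⟨hd, h0⟩, rfl⟩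
      exact ⟨hd, ((isPartition1_and_inducesPartition_iff hd).2 ⟨h0, rfl⟩).2⟩
  rw [D, hfiber, sum_mul]
  refine sum_congr rfl fun g hg => ?_
  rw [(mem_filter.1 hg).2, mul_sum]
  exact sum_congr rfl fun T _ => mul_comm _ _

/-- **Proposition 2.2(a) of Féray–Goulden–Lascoux.**  For `r ≥ 2`,
`y_{1,1} · L(x,y) = ∑_{π ∈ Π_1({1,…,r})} D(π) ∑_{T ∈ E(π)} κ(T)`. -/
theorem left_side_dominating_expansion (r : ℕ) (hr : 2 ≤ r) :
    y 1 1 * ∑ T : IncTree r,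
        ∏ v ∈ Finset.univ.filter (fun v : Fin r => v.val ≠ 0),
          x ((T.val v).val + 1) * ∑ u ∈ hook T.val v, y (v.val + 1) (u.val + 1)
    = ∑ π ∈ Finset.univ.filter (fun π : Finset (Finset (Fin r)) => IsPartition1 π),
        D π * ∑ T ∈ Finset.univ.filter (fun T : IncTree r => MemE T π), kappa T := by
  have : NeZero r := ⟨by omega⟩
  rw [sum_D_mul_sum_kappa, mul_sum]
  simp_rw [y_one_one_mul_treeWeight, mul_sum]
  refine sum_comm' fun T g => ?_
  rw [mem_hookFunctions, forall_mem_hook_iff]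
  simp only [mem_univ, mem_filter, true_and]
  tauto
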